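/- arXiv:1811.04040 — 4 statements merged into one kernel-verified Lean document; each statement's English description precedes it below -/
import Mathlib

section
/- Let n ≥ 2 be a natural number and fix two distinct indices i ≠ j in Fin n. Let A : ℝ → Matrix (Fin n) (Fin n) ℝ be a family of matrices such that every entry of A(h) other than the (i,j) and (j,i) entries is independent of h, and A(h)ᵢⱼ = A(h)ⱼᵢ = h. Then the function h ↦ det(A(h)) · ( (A(h)⁻¹)ᵢᵢ (A(h)⁻¹)ⱼⱼ − (A(h)⁻¹)ᵢⱼ (A(h)⁻¹)ⱼᵢ ) takes the same value at any two points h₁, h₂ at which A(h₁) and A(h₂) are invertible; in particular, whenever A(h) is invertible on an open interval, the derivative of this function with respect to h vanishes there. (Paper's Lemma 6: the combination |g|(g^{xx}g^{yy} − (g^{xy})²) built from the metric determinant and inverse-metric components does not depend on the fluctuation h_{xy}, since by Jacobi's identity det(A)·det of the 2×2 submatrix of A⁻¹ on rows/columns {i,j} equals the complementary minor of A, which contains no (i,j) or (j,i) entry.) -/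
/-!
Jacobi's complementary-minor identity: for invertible `A`, `det A · det (A⁻¹ on rows and
columns {i, j})` is the determinant of `A` with columns `i` and `j` replaced by the unit vectors
`eᵢ`, `eⱼ`. That matrix no longer contains the entries `(i, j)` and `(j, i)`, so it does not
depend on `h`. The identity itself is the matrix determinant lemma `det (A + U V) =
det A · det (1 + V A⁻¹ U)` applied to the low-rank update that replaces those columns.
-/

namespace Matrix

variable {m ι R : Type*} [DecidableEq m] [Fintype ι]

section ZeroOne

variable [Zero R] [One R]

def updateColsOne (A : Matrix m m R) (e : ι → m) : Matrix m m R :=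
  of fun k l => if ∃ p, e p = l then (1 : Matrix m m R) k l else A k l

theorem updateColsOne_congr {A B : Matrix m m R} {e : ι → m}
    (h : ∀ k l, (∀ p, e p ≠ l) → A k l = B k l) : updateColsOne A e = updateColsOne B e := by
  ext k l
  simp only [updateColsOne, of_apply]
  split_ifs with hl
  · rfl
  · push Not at hl
    exact h k l hl

end ZeroOne

variable [CommRing R]

theorem updateColsOne_eq_add_mul (A : Matrix m m R) {e : ι → m} (he : Function.Injective e) :
    updateColsOne A e = A + (1 - A).submatrix id e * (1 : Matrix m m R).submatrix e id := by
  ext k l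
  simp only [updateColsOne, of_apply, add_apply, mul_apply, submatrix_apply, id_eq]
  split_ifs with hl
  · obtain ⟨q, rfl⟩ := hl
    rw [Finset.sum_eq_single q (fun p _ hp => by simp [he.ne hp]) (by simp),
      id_eq, one_apply_eq, sub_apply]
    ring
  · push Not at hl
    simp [one_apply, hl]

theorem det_mul_det_submatrix_nonsing_inv [Fintype m] [DecidableEq ι] {A : Matrix m m R}
    (hA : IsUnit A.det) {e : ι → m} (he : Function.Injective e) :
    A.det * (A⁻¹.submatrix e e).det = (updateColsOne A e).det := by
  have hsub : (1 : Matrix m m R).submatrix e id * A⁻¹ * (1 - A).submatrix id e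
      = A⁻¹.submatrix e e - 1 := by
    have hrows : (1 : Matrix m m R).submatrix e id * A⁻¹ = A⁻¹.submatrix e id := by
      ext k l; simp [mul_apply, one_apply]
    rw [hrows, ← submatrix_mul _ _ _ _ _ Function.bijective_id, Matrix.mul_sub, mul_one,
      nonsing_inv_mul _ hA, ← submatrix_one e he]
    rfl
  rw [updateColsOne_eq_add_mul A he, det_add_mul _ _ hA, hsub, add_sub_cancel]

end Matrix

theorem stmt_2_general (n : ℕ) (i j : Fin n) (hij : i ≠ j)
    (A : ℝ → Matrix (Fin n) (Fin n) ℝ)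
    (hconst : ∀ h h' : ℝ, ∀ k l : Fin n,
      ¬(k = i ∧ l = j) → ¬(k = j ∧ l = i) → A h k l = A h' k l) :
    (∀ h₁ h₂ : ℝ, IsUnit (A h₁).det → IsUnit (A h₂).det →
      (A h₁).det * ((A h₁)⁻¹ i i * (A h₁)⁻¹ j j - (A h₁)⁻¹ i j * (A h₁)⁻¹ j i)
        = (A h₂).det * ((A h₂)⁻¹ i i * (A h₂)⁻¹ j j - (A h₂)⁻¹ i j * (A h₂)⁻¹ j i)) ∧
    (∀ a b : ℝ, (∀ h ∈ Set.Ioo a b, IsUnit (A h).det) →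
      ∀ h ∈ Set.Ioo a b,
        deriv (fun t =>
          (A t).det * ((A t)⁻¹ i i * (A t)⁻¹ j j - (A t)⁻¹ i j * (A t)⁻¹ j i)) h = 0) := by
  have he : Function.Injective ![i, j] := injective_pair_iff_ne.mpr hij
  have hminor : ∀ h, IsUnit (A h).det →
      (A h).det * ((A h)⁻¹ i i * (A h)⁻¹ j j - (A h)⁻¹ i j * (A h)⁻¹ j i)
        = (Matrix.updateColsOne (A 0) ![i, j]).det := fun h hA => by
    have hcols : Matrix.updateColsOne (A h) ![i, j] = Matrix.updateColsOne (A 0) ![i, j] :=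
      Matrix.updateColsOne_congr fun k l hl =>
        hconst h 0 k l (fun hkl => hl 1 hkl.2.symm) (fun hkl => hl 0 hkl.2.symm)
    rw [← hcols, ← Matrix.det_mul_det_submatrix_nonsing_inv hA he, Matrix.det_fin_two]
    rfl
  refine ⟨fun h₁ h₂ hA₁ hA₂ => by rw [hminor h₁ hA₁, hminor h₂ hA₂], ?_⟩
  intro a b hA h hh
  have hconst_near : (fun t => (A t).det *
        ((A t)⁻¹ i i * (A t)⁻¹ j j - (A t)⁻¹ i j * (A t)⁻¹ j i))
      =ᶠ[nhds h] fun _ => (Matrix.updateColsOne (A 0) ![i, j]).det := by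
    filter_upwards [isOpen_Ioo.mem_nhds hh] with t ht
    exact hminor t (hA t ht)
  rw [hconst_near.deriv_eq, deriv_const]

/-- Paper's Lemma 6: the combination `det(A) · ((A⁻¹)ᵢᵢ(A⁻¹)ⱼⱼ − (A⁻¹)ᵢⱼ(A⁻¹)ⱼᵢ)`
does not depend on the parameter `h` entering only the symmetric off-diagonal
entries `(i,j)` and `(j,i)`; in particular its derivative vanishes wherever the
matrix is invertible on an open interval. -/
theorem stmt_2 (n : ℕ) (hn : 2 ≤ n) (i j : Fin n) (hij : i ≠ j)
    (A : ℝ → Matrix (Fin n) (Fin n) ℝ)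
    (hconst : ∀ h h' : ℝ, ∀ k l : Fin n,
      ¬(k = i ∧ l = j) → ¬(k = j ∧ l = i) → A h k l = A h' k l)
    (hentry : ∀ h : ℝ, A h i j = h ∧ A h j i = h) :
    (∀ h₁ h₂ : ℝ, IsUnit (A h₁).det → IsUnit (A h₂).det →
      (A h₁).det * ((A h₁)⁻¹ i i * (A h₁)⁻¹ j j - (A h₁)⁻¹ i j * (A h₁)⁻¹ j i)
        = (A h₂).det * ((A h₂)⁻¹ i i * (A h₂)⁻¹ j j - (A h₂)⁻¹ i j * (A h₂)⁻¹ j i)) ∧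
    (∀ a b : ℝ, (∀ h ∈ Set.Ioo a b, IsUnit (A h).det) →
      ∀ h ∈ Set.Ioo a b,
        deriv (fun t =>
          (A t).det * ((A t)⁻¹ i i * (A t)⁻¹ j j - (A t)⁻¹ i j * (A t)⁻¹ j i)) h = 0) :=
  stmt_2_general n i j hij A hconst
end

section
/- Let b, l₀, u₁ ∈ ℝ with l₀ ≠ 0 and u₁ ≠ 0. Suppose U, V, W, L : ℝ → ℝ are twice differentiable at u = 1 and satisfy U(1) = 0, V(1) = 0, W(1) = 0, L(1) = l₀, U'(1) = −u₁, and the magnetic black brane equations E₁ = E₂ = E₃ = E₄ = E₅ = 0 at u = 1. Then V'(1) = (b²l₀¹² + b²l₀⁴ − 6)/(6 l₀¹⁰ u₁); equivalently, the coefficient v₁ of (1−u) in the near-horizon expansion V(u) = v₁(1−u) + O((1−u)²) equals v₁ = −(b²l₀¹² + b²l₀⁴ − 6)/(6 l₀¹⁰ u₁). -/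
open Real

/-- First magnetic black brane equation of motion (evaluated at `u`). -/
noncomputable def E1 (b : ℝ) (U V W L : ℝ → ℝ) (u : ℝ) : ℝ :=
  b ^ 2 * (L u) ^ 12 + 2 * b ^ 2 * (L u) ^ 4
    + 30 * (L u) ^ 8 * Real.exp (4 * V u) * (4 * u ^ 3 * U u * (deriv L u) ^ 2 - 1)
    + 30 * u ^ 2 * (L u) ^ 9 * Real.exp (4 * V u) *
      (u * deriv L u * deriv U u + U u * (2 * u * deriv (deriv L) u
        + deriv L u * (4 * u * deriv V u + 2 * u * deriv W u + 3)))
    + 6 * u ^ 2 * (L u) ^ 10 * Real.exp (4 * V u) *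
      (u * deriv U u * (2 * deriv V u + deriv W u)
        + U u * (4 * u * deriv (deriv V) u + deriv V u * (4 * u * deriv W u + 6)
          + 6 * u * (deriv V u) ^ 2 + 2 * u * deriv (deriv W) u
          + 2 * u * (deriv W u) ^ 2 + 3 * deriv W u))
    + 12 * Real.exp (4 * V u)

/-- Second magnetic black brane equation of motion (evaluated at `u`). -/
noncomputable def E2 (b : ℝ) (U V W L : ℝ → ℝ) (u : ℝ) : ℝ :=
  b ^ 2 * (L u) ^ 12 + 2 * b ^ 2 * (L u) ^ 4
    + 30 * u ^ 3 * (L u) ^ 9 * Real.exp (4 * V u) * deriv L u *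
      (deriv U u + 2 * U u * (2 * deriv V u + deriv W u))
    + 30 * (L u) ^ 8 * Real.exp (4 * V u) * (4 * u ^ 3 * U u * (deriv L u) ^ 2 - 1)
    + 6 * u ^ 3 * (L u) ^ 10 * Real.exp (4 * V u) *
      (deriv U u * (2 * deriv V u + deriv W u)
        + 2 * U u * deriv V u * (deriv V u + 2 * deriv W u))
    + 12 * Real.exp (4 * V u)

/-- Third magnetic black brane equation of motion (evaluated at `u`). -/
noncomputable def E3 (b : ℝ) (U V W L : ℝ → ℝ) (u : ℝ) : ℝ :=
  7 * b ^ 2 * (L u) ^ 12 - 2 * b ^ 2 * (L u) ^ 4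
    + 90 * (L u) ^ 8 * Real.exp (4 * V u) * (4 * u ^ 3 * U u * (deriv L u) ^ 2 - 1)
    + 120 * u ^ 2 * (L u) ^ 9 * Real.exp (4 * V u) *
      (2 * u * deriv L u * deriv U u + U u * (2 * u * deriv (deriv L) u
        + deriv L u * (4 * u * deriv V u + 2 * u * deriv W u + 3)))
    + 15 * u ^ 2 * (L u) ^ 10 * Real.exp (4 * V u) *
      (2 * (u * deriv (deriv U) u
          + U u * (4 * u * deriv (deriv V) u + deriv V u * (4 * u * deriv W u + 6)
            + 6 * u * (deriv V u) ^ 2 + 2 * u * deriv (deriv W) u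
            + 2 * u * (deriv W u) ^ 2 + 3 * deriv W u))
        + deriv U u * (8 * u * deriv V u + 4 * u * deriv W u + 3))
    - 60 * Real.exp (4 * V u)

/-- Fourth magnetic black brane equation of motion (evaluated at `u`). -/
noncomputable def E4 (b : ℝ) (U V W L : ℝ → ℝ) (u : ℝ) : ℝ :=
  b ^ 2 * (L u) ^ 12 + 2 * b ^ 2 * (L u) ^ 4
    - 30 * (L u) ^ 8 * Real.exp (4 * V u) * (4 * u ^ 3 * U u * (deriv L u) ^ 2 - 1)
    - 30 * u ^ 2 * (L u) ^ 9 * Real.exp (4 * V u) *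
      (2 * u * deriv L u * deriv U u + U u * (2 * u * deriv (deriv L) u
        + deriv L u * (2 * u * deriv V u + 2 * u * deriv W u + 3)))
    - 3 * u ^ 2 * (L u) ^ 10 * Real.exp (4 * V u) *
      (2 * u * deriv (deriv U) u
        + deriv U u * (4 * u * deriv V u + 4 * u * deriv W u + 3)
        + U u * (4 * u * (deriv (deriv V) u + deriv (deriv W) u)
          + deriv V u * (4 * u * deriv W u + 6) + 4 * u * (deriv V u) ^ 2
          + 4 * u * (deriv W u) ^ 2 + 6 * deriv W u))
    - 12 * Real.exp (4 * V u)

/-- Fifth magnetic black brane equation of motion (evaluated at `u`). -/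
noncomputable def E5 (b : ℝ) (U V W L : ℝ → ℝ) (u : ℝ) : ℝ :=
  b ^ 2 * (L u) ^ 12 + 2 * b ^ 2 * (L u) ^ 4
    + 30 * (L u) ^ 8 * Real.exp (4 * V u) * (4 * u ^ 3 * U u * (deriv L u) ^ 2 - 1)
    + 30 * u ^ 2 * (L u) ^ 9 * Real.exp (4 * V u) *
      (2 * u * deriv L u * deriv U u + U u * (2 * u * deriv (deriv L) u
        + deriv L u * (4 * u * deriv V u + 3)))
    + 3 * u ^ 2 * (L u) ^ 10 * Real.exp (4 * V u) *
      (2 * (u * deriv (deriv U) u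
          + U u * (4 * u * deriv (deriv V) u + 6 * u * (deriv V u) ^ 2 + 6 * deriv V u))
        + deriv U u * (8 * u * deriv V u + 3))
    + 12 * Real.exp (4 * V u)

theorem E1_eq_of_horizon {b : ℝ} {U V W L : ℝ → ℝ} (hU : U 1 = 0) (hV : V 1 = 0) :
    E1 b U V W L 1 = b ^ 2 * L 1 ^ 12 + 2 * b ^ 2 * L 1 ^ 4 - 30 * L 1 ^ 8
      + 30 * L 1 ^ 9 * deriv L 1 * deriv U 1
      + 6 * L 1 ^ 10 * deriv U 1 * (2 * deriv V 1 + deriv W 1) + 12 := by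
  simp only [E1, hU, hV, mul_zero, Real.exp_zero]
  ring

theorem E3_eq_of_horizon {b : ℝ} {U V W L : ℝ → ℝ} (hU : U 1 = 0) (hV : V 1 = 0) :
    E3 b U V W L 1 = 7 * b ^ 2 * L 1 ^ 12 - 2 * b ^ 2 * L 1 ^ 4 - 90 * L 1 ^ 8
      + 240 * L 1 ^ 9 * deriv L 1 * deriv U 1
      + 15 * L 1 ^ 10 * (2 * deriv (deriv U) 1
        + deriv U 1 * (8 * deriv V 1 + 4 * deriv W 1 + 3)) - 60 := by
  simp only [E3, hU, hV, mul_zero, Real.exp_zero]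
  ring

theorem E4_eq_of_horizon {b : ℝ} {U V W L : ℝ → ℝ} (hU : U 1 = 0) (hV : V 1 = 0) :
    E4 b U V W L 1 = b ^ 2 * L 1 ^ 12 + 2 * b ^ 2 * L 1 ^ 4 + 30 * L 1 ^ 8
      - 60 * L 1 ^ 9 * deriv L 1 * deriv U 1
      - 3 * L 1 ^ 10 * (2 * deriv (deriv U) 1
        + deriv U 1 * (4 * deriv V 1 + 4 * deriv W 1 + 3)) - 12 := by
  simp only [E4, hU, hV, mul_zero, Real.exp_zero]
  ring

theorem E5_eq_of_horizon {b : ℝ} {U V W L : ℝ → ℝ} (hU : U 1 = 0) (hV : V 1 = 0) :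
    E5 b U V W L 1 = b ^ 2 * L 1 ^ 12 + 2 * b ^ 2 * L 1 ^ 4 - 30 * L 1 ^ 8
      + 60 * L 1 ^ 9 * deriv L 1 * deriv U 1
      + 3 * L 1 ^ 10 * (2 * deriv (deriv U) 1 + deriv U 1 * (8 * deriv V 1 + 3)) + 12 := by
  simp only [E5, hU, hV, mul_zero, Real.exp_zero]
  ring

theorem stmt_3_general (b l₀ u₁ : ℝ) (hl₀ : l₀ ≠ 0) (hu₁ : u₁ ≠ 0)
    (U V W L : ℝ → ℝ)
    (hU1 : U 1 = 0) (hV1 : V 1 = 0) (hL1 : L 1 = l₀)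
    (hU'1 : deriv U 1 = -u₁)
    (he1 : E1 b U V W L 1 = 0)
    (he3 : E3 b U V W L 1 = 0) (he4 : E4 b U V W L 1 = 0)
    (he5 : E5 b U V W L 1 = 0) :
    deriv V 1 = (b ^ 2 * l₀ ^ 12 + b ^ 2 * l₀ ^ 4 - 6) / (6 * l₀ ^ 10 * u₁) := by
  rw [E1_eq_of_horizon hU1 hV1, hL1, hU'1] at he1
  rw [E3_eq_of_horizon hU1 hV1, hL1, hU'1] at he3
  rw [E4_eq_of_horizon hU1 hV1, hL1, hU'1] at he4
  rw [E5_eq_of_horizon hU1 hV1, hL1, hU'1] at he5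
  rw [eq_div_iff (by positivity)]
  -- At the horizon the equations are linear in L'(1), U''(1), V'(1), W'(1);
  -- this combination eliminates L'(1), U''(1) and W'(1).
  linear_combination (-1/8 : ℝ) * he1 - (1/16 : ℝ) * he3 - (3/8 : ℝ) * he4 - (1/16 : ℝ) * he5

/-- Near-horizon expansion of the magnetic black brane: the coefficient
`v₁ = −V'(1)` is fixed by the equations of motion to
`v₁ = −(b²l₀¹² + b²l₀⁴ − 6)/(6 l₀¹⁰ u₁)`. -/
theorem stmt_3 (b l₀ u₁ : ℝ) (hl₀ : l₀ ≠ 0) (hu₁ : u₁ ≠ 0)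
    (U V W L : ℝ → ℝ)
    (hU : DifferentiableAt ℝ U 1) (hU' : DifferentiableAt ℝ (deriv U) 1)
    (hV : DifferentiableAt ℝ V 1) (hV' : DifferentiableAt ℝ (deriv V) 1)
    (hW : DifferentiableAt ℝ W 1) (hW' : DifferentiableAt ℝ (deriv W) 1)
    (hL : DifferentiableAt ℝ L 1) (hL' : DifferentiableAt ℝ (deriv L) 1)
    (hU1 : U 1 = 0) (hV1 : V 1 = 0) (hW1 : W 1 = 0) (hL1 : L 1 = l₀)
    (hU'1 : deriv U 1 = -u₁)
    (he1 : E1 b U V W L 1 = 0) (he2 : E2 b U V W L 1 = 0)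
    (he3 : E3 b U V W L 1 = 0) (he4 : E4 b U V W L 1 = 0)
    (he5 : E5 b U V W L 1 = 0) :
    deriv V 1 = (b ^ 2 * l₀ ^ 12 + b ^ 2 * l₀ ^ 4 - 6) / (6 * l₀ ^ 10 * u₁) :=
  stmt_3_general b l₀ u₁ hl₀ hu₁ U V W L hU1 hV1 hL1 hU'1 he1 he3 he4 he5
end

section
/- Let b, l₀, u₁ ∈ ℝ with l₀ ≠ 0 and u₁ ≠ 0. Suppose U, V, W, L : ℝ → ℝ are twice differentiable at u = 1 and satisfy U(1) = 0, V(1) = 0, W(1) = 0, L(1) = l₀, U'(1) = −u₁, and the magnetic black brane equations E₁ = E₂ = E₃ = E₄ = E₅ = 0 at u = 1. Then W'(1) = −(b²l₀⁴ + 6)/(6 l₀¹⁰ u₁); equivalently, the coefficient w₁ of (1−u) in the near-horizon expansion W(u) = w₁(1−u) + O((1−u)²) equals w₁ = −(−b²l₀⁴ − 6)/(6 l₀¹⁰ u₁). -/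
open Real

/-! Where `U` vanishes (a horizon) every equation of motion is affine in `U''`, `U' L'`,
`U' V'` and `U' W'`. The combination `2 E₁ + E₃ − 2 E₄ − 7 E₅` cancels the first three, so the
equations fix `U' W'` at the horizon in terms of `L` and `V` alone; at `u = 1`, with `V(1) = 0`,
`L(1) = l₀` and `U'(1) = −u₁`, this is the claimed value of `W'(1)`. -/

theorem E_combination_of_horizon (b : ℝ) {U : ℝ → ℝ} (V W L : ℝ → ℝ) {u : ℝ} (hU : U u = 0) :
    2 * E1 b U V W L u + E3 b U V W L u - 2 * E4 b U V W L u - 7 * E5 b U V W L u =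
      16 * (6 * u ^ 3 * L u ^ 10 * exp (4 * V u) * deriv U u * deriv W u
        - b ^ 2 * L u ^ 4 - 6 * exp (4 * V u)) := by
  simp only [E1, E3, E4, E5, hU]
  ring

theorem horizon_constraint_deriv_W {b : ℝ} {U V W L : ℝ → ℝ} {u : ℝ} (hU : U u = 0)
    (he1 : E1 b U V W L u = 0) (he3 : E3 b U V W L u = 0) (he4 : E4 b U V W L u = 0)
    (he5 : E5 b U V W L u = 0) :
    6 * u ^ 3 * L u ^ 10 * exp (4 * V u) * deriv U u * deriv W u =
      b ^ 2 * L u ^ 4 + 6 * exp (4 * V u) := by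
  linear_combination (2 * he1 + he3 - 2 * he4 - 7 * he5 - E_combination_of_horizon b V W L hU) / 16

theorem stmt_4_general (b l₀ u₁ : ℝ) (hl₀ : l₀ ≠ 0) (hu₁ : u₁ ≠ 0)
    (U V W L : ℝ → ℝ)
    (hU1 : U 1 = 0) (hV1 : V 1 = 0) (hL1 : L 1 = l₀)
    (hU'1 : deriv U 1 = -u₁)
    (he1 : E1 b U V W L 1 = 0)
    (he3 : E3 b U V W L 1 = 0) (he4 : E4 b U V W L 1 = 0)
    (he5 : E5 b U V W L 1 = 0) :
    deriv W 1 = -(b ^ 2 * l₀ ^ 4 + 6) / (6 * l₀ ^ 10 * u₁) := by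
  have h := horizon_constraint_deriv_W hU1 he1 he3 he4 he5
  rw [hV1, hL1, hU'1, mul_zero, exp_zero] at h
  rw [eq_div_iff (by positivity)]
  linear_combination -h

/-- Near-horizon expansion of the magnetic black brane: the coefficient
`w₁ = −W'(1)` is fixed by the equations of motion to
`w₁ = −(−b²l₀⁴ − 6)/(6 l₀¹⁰ u₁)`, i.e. `W'(1) = −(b²l₀⁴ + 6)/(6 l₀¹⁰ u₁)`. -/
theorem stmt_4 (b l₀ u₁ : ℝ) (hl₀ : l₀ ≠ 0) (hu₁ : u₁ ≠ 0)
    (U V W L : ℝ → ℝ)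
    (hU : DifferentiableAt ℝ U 1) (hU' : DifferentiableAt ℝ (deriv U) 1)
    (hV : DifferentiableAt ℝ V 1) (hV' : DifferentiableAt ℝ (deriv V) 1)
    (hW : DifferentiableAt ℝ W 1) (hW' : DifferentiableAt ℝ (deriv W) 1)
    (hL : DifferentiableAt ℝ L 1) (hL' : DifferentiableAt ℝ (deriv L) 1)
    (hU1 : U 1 = 0) (hV1 : V 1 = 0) (hW1 : W 1 = 0) (hL1 : L 1 = l₀)
    (hU'1 : deriv U 1 = -u₁)
    (he1 : E1 b U V W L 1 = 0) (he2 : E2 b U V W L 1 = 0)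
    (he3 : E3 b U V W L 1 = 0) (he4 : E4 b U V W L 1 = 0)
    (he5 : E5 b U V W L 1 = 0) :
    deriv W 1 = -(b ^ 2 * l₀ ^ 4 + 6) / (6 * l₀ ^ 10 * u₁) :=
  stmt_4_general b l₀ u₁ hl₀ hu₁ U V W L hU1 hV1 hL1 hU'1 he1 he3 he4 he5
end

section
/- Let b, l₀, u₁ ∈ ℝ with l₀ ≠ 0 and u₁ ≠ 0. Suppose U, V, W, L : ℝ → ℝ are twice differentiable at u = 1 and satisfy U(1) = 0, V(1) = 0, W(1) = 0, L(1) = l₀, U'(1) = −u₁, and the magnetic black brane equations E₁ = E₂ = E₃ = E₄ = E₅ = 0 at u = 1. Then L'(1) = (−b²l₀¹² + b²l₀⁴ − 30l₀⁸ + 30)/(30 l₀⁹ u₁); equivalently, the coefficient l₁ of (1−u) in the near-horizon expansion L(u) = l₀ + l₁(1−u) + O((1−u)²) equals l₁ = −(−b²l₀¹² + b²l₀⁴ − 30l₀⁸ + 30)/(30 l₀⁹ u₁). In particular, if l₀ = 1 then L'(1) = 0. -/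
open Real

/-! Where `U` vanishes, every second derivative except `U''` drops out of the equations of motion.
The combination `-5/8 E₁ + 3/16 E₃ + 5/8 E₄ - 5/16 E₅` also cancels `U''`, `V'` and `W'`, which
leaves a horizon constraint linear in `L'`; at `u = 1` with `V(1) = 0` it determines `L'(1)`. -/

theorem combination_E_eq_of_U_eq_zero (b : ℝ) (U V W L : ℝ → ℝ) (u : ℝ) (hU : U u = 0) :
    -5 / 8 * E1 b U V W L u + 3 / 16 * E3 b U V W L u + 5 / 8 * E4 b U V W L u
        - 5 / 16 * E5 b U V W L u =
      b ^ 2 * L u ^ 12 - b ^ 2 * L u ^ 4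
        + 30 * Real.exp (4 * V u) * (L u ^ 8 - u ^ 3 * L u ^ 9 * deriv L u * deriv U u - 1) := by
  simp only [E1, E3, E4, E5, hU]
  ring

theorem horizon_constraint (b : ℝ) (U V W L : ℝ → ℝ) (u : ℝ) (hU : U u = 0)
    (he1 : E1 b U V W L u = 0) (he3 : E3 b U V W L u = 0) (he4 : E4 b U V W L u = 0)
    (he5 : E5 b U V W L u = 0) :
    b ^ 2 * L u ^ 12 - b ^ 2 * L u ^ 4
      + 30 * Real.exp (4 * V u) * (L u ^ 8 - u ^ 3 * L u ^ 9 * deriv L u * deriv U u - 1) = 0 := by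
  rw [← combination_E_eq_of_U_eq_zero b U V W L u hU, he1, he3, he4, he5]
  ring

theorem stmt_5_general (b l₀ u₁ : ℝ) (hl₀ : l₀ ≠ 0) (hu₁ : u₁ ≠ 0)
    (U V W L : ℝ → ℝ)
    (hU1 : U 1 = 0) (hV1 : V 1 = 0) (hL1 : L 1 = l₀)
    (hU'1 : deriv U 1 = -u₁)
    (he1 : E1 b U V W L 1 = 0)
    (he3 : E3 b U V W L 1 = 0) (he4 : E4 b U V W L 1 = 0)
    (he5 : E5 b U V W L 1 = 0) :
    deriv L 1 = (-(b ^ 2) * l₀ ^ 12 + b ^ 2 * l₀ ^ 4 - 30 * l₀ ^ 8 + 30)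
        / (30 * l₀ ^ 9 * u₁) ∧
      (l₀ = 1 → deriv L 1 = 0) := by
  have hconstraint := horizon_constraint b U V W L 1 hU1 he1 he3 he4 he5
  rw [hV1, hL1, hU'1, mul_zero, Real.exp_zero] at hconstraint
  have hL'1 : deriv L 1 = (-(b ^ 2) * l₀ ^ 12 + b ^ 2 * l₀ ^ 4 - 30 * l₀ ^ 8 + 30)
      / (30 * l₀ ^ 9 * u₁) := by
    rw [eq_div_iff (by positivity)]
    linear_combination hconstraint
  refine ⟨hL'1, fun hl₀_one => ?_⟩
  rw [hL'1, hl₀_one]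
  norm_num

/-- Near-horizon expansion of the magnetic black brane: the coefficient
`l₁ = −L'(1)` is fixed by the equations of motion to
`l₁ = −(−b²l₀¹² + b²l₀⁴ − 30l₀⁸ + 30)/(30 l₀⁹ u₁)`; in particular `L'(1) = 0`
when `l₀ = 1`. -/
theorem stmt_5 (b l₀ u₁ : ℝ) (hl₀ : l₀ ≠ 0) (hu₁ : u₁ ≠ 0)
    (U V W L : ℝ → ℝ)
    (hU : DifferentiableAt ℝ U 1) (hU' : DifferentiableAt ℝ (deriv U) 1)
    (hV : DifferentiableAt ℝ V 1) (hV' : DifferentiableAt ℝ (deriv V) 1)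
    (hW : DifferentiableAt ℝ W 1) (hW' : DifferentiableAt ℝ (deriv W) 1)
    (hL : DifferentiableAt ℝ L 1) (hL' : DifferentiableAt ℝ (deriv L) 1)
    (hU1 : U 1 = 0) (hV1 : V 1 = 0) (hW1 : W 1 = 0) (hL1 : L 1 = l₀)
    (hU'1 : deriv U 1 = -u₁)
    (he1 : E1 b U V W L 1 = 0) (he2 : E2 b U V W L 1 = 0)
    (he3 : E3 b U V W L 1 = 0) (he4 : E4 b U V W L 1 = 0)
    (he5 : E5 b U V W L 1 = 0) :
    deriv L 1 = (-(b ^ 2) * l₀ ^ 12 + b ^ 2 * l₀ ^ 4 - 30 * l₀ ^ 8 + 30)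
        / (30 * l₀ ^ 9 * u₁) ∧
      (l₀ = 1 → deriv L 1 = 0) :=
  stmt_5_general b l₀ u₁ hl₀ hu₁ U V W L hU1 hV1 hL1 hU'1 he1 he3 he4 he5
end
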